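/- (Lemma on hard constraints, part 2.) Suppose f_a ≥ 0 with ∑_{x_a} f_a(x_a) > 0 for all a ∈ A_BP, f_a > 0 for all a ∈ A_MF, the beliefs b_i (i ∈ I) are probability mass functions on S_i, the beliefs b_a (a ∈ A_BP) are probability mass functions on the configurations x_a, and the marginalization constraints b_i(x_i) = ∑_{x_a\x_i} b_a(x_a) hold for all a ∈ A_BP, i ∈ N(a). Then, interpreting F_BP,MF as an extended-real-valued sum with the conventions 0·ln 0 = 0 and t·ln(t/0) = +∞ for t > 0, one has F_BP,MF < +∞ if and only if b_a(x̄_a) = 0 for every a ∈ A_BP and every configuration x̄_a with f_a(x̄_a) = 0. -/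

import Mathlib

/-!
Every summand of the combined free energy other than the Bethe (BP) terms is a real number, and
in `EReal` a finite sum of terms that are never `⊥` is finite exactly when each term is. So
`F < ⊤` iff every BP summand `b_a ln (b_a / f_a)` is finite, and the only infinite ones are
`t ln (t / 0)` with `t ≠ 0`.
-/

open Finset

abbrev Cfg {ι : Type} (S : ι → Type) (t : Finset ι) : Type :=
  ∀ j : {x // x ∈ t}, S j.1

namespace EReal

variable {β : Type*} {s : Finset β} {g : β → EReal}

lemma sum_ne_bot (h : ∀ x ∈ s, g x ≠ ⊥) : ∑ x ∈ s, g x ≠ ⊥ := by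
  induction s using Finset.cons_induction with
  | empty => simp
  | cons a s ha ih =>
    rw [sum_cons, add_ne_bot_iff]
    exact ⟨h a (mem_cons_self a s), ih fun x hx => h x (mem_cons_of_mem hx)⟩

lemma sum_ne_top_iff (h : ∀ x ∈ s, g x ≠ ⊥) : ∑ x ∈ s, g x ≠ ⊤ ↔ ∀ x ∈ s, g x ≠ ⊤ := by
  induction s using Finset.cons_induction with
  | empty => simp
  | cons a s ha ih =>
    have hs : ∀ x ∈ s, g x ≠ ⊥ := fun x hx => h x (mem_cons_of_mem hx)
    rw [sum_cons, add_ne_top_iff_ne_top₂ (h a (mem_cons_self a s)) (sum_ne_bot hs), ih hs,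
      forall_mem_cons]

end EReal

noncomputable def klSummand (b f : ℝ) : EReal :=
  if b = 0 then 0 else if f = 0 then ⊤ else ((b * Real.log (b / f) : ℝ) : EReal)

lemma klSummand_ne_bot (b f : ℝ) : klSummand b f ≠ ⊥ := by
  unfold klSummand
  split_ifs
  exacts [EReal.zero_ne_bot, top_ne_bot, EReal.coe_ne_bot _]

lemma klSummand_ne_top_iff (b f : ℝ) : klSummand b f ≠ ⊤ ↔ (f = 0 → b = 0) := by
  unfold klSummand
  by_cases hb : b = 0 <;> by_cases hf : f = 0 <;> simp [hb, hf, -EReal.coe_mul]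

lemma sum_klSummand_ne_top_iff {β : Type*} (s : Finset β) (b f : β → ℝ) :
    ∑ x ∈ s, klSummand (b x) (f x) ≠ ⊤ ↔ ∀ x ∈ s, f x = 0 → b x = 0 := by
  rw [EReal.sum_ne_top_iff fun x _ => klSummand_ne_bot _ _]
  exact forall₂_congr fun x _ => klSummand_ne_top_iff _ _

theorem statement5_general
    {ι α : Type} [Fintype ι] [DecidableEq ι]
    (S : ι → Type) [∀ i, Fintype (S i)]
    (N : α → Finset ι) (αBP αMF : Finset α)
    (f : ∀ a : α, Cfg S (N a) → ℝ)
    (ba : ∀ a : α, Cfg S (N a) → ℝ) (bi : ∀ i : ι, S i → ℝ)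
    (F : EReal)
    (hF : F = (∑ a ∈ αBP, ∑ xa : Cfg S (N a),
          (if ba a xa = 0 then (0 : EReal)
           else if f a xa = 0 then (⊤ : EReal)
           else ((ba a xa * Real.log (ba a xa / f a xa) : ℝ) : EReal)))
        + (((-(∑ a ∈ αMF, ∑ xa : Cfg S (N a),
            (∏ j : {x // x ∈ N a}, bi j.1 (xa j)) * Real.log (f a xa))) : ℝ) : EReal)
        + (((-(∑ i : ι, ((((αBP.filter (fun c => i ∈ N c)).card : ℝ) - 1) *
            ∑ xi : S i, bi i xi * Real.log (bi i xi)))) : ℝ) : EReal)) :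
    F < (⊤ : EReal) ↔
      ∀ a ∈ αBP, ∀ xa : Cfg S (N a), f a xa = 0 → ba a xa = 0 := by
  change F = ∑ a ∈ αBP, ∑ xa, klSummand (ba a xa) (f a xa) + _ + _ at hF
  rw [hF, lt_top_iff_ne_top,
    EReal.add_ne_top_iff_of_ne_bot_of_ne_top (EReal.coe_ne_bot _) (EReal.coe_ne_top _),
    EReal.add_ne_top_iff_of_ne_bot_of_ne_top (EReal.coe_ne_bot _) (EReal.coe_ne_top _),
    EReal.sum_ne_top_iff fun a _ => EReal.sum_ne_bot fun xa _ => klSummand_ne_bot _ _]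
  exact forall₂_congr fun a _ => by simpa only [mem_univ, true_implies] using sum_klSummand_ne_top_iff univ (ba a) (f a)

theorem statement5
    {ι α : Type} [Fintype ι] [Fintype α] [DecidableEq ι] [DecidableEq α]
    (S : ι → Type) [∀ i, Fintype (S i)] [∀ i, Nonempty (S i)] [∀ i, DecidableEq (S i)]
    (N : α → Finset ι) (αBP αMF : Finset α)
    (hdisj : Disjoint αBP αMF) (hcov : αBP ∪ αMF = Finset.univ)
    (hIcov : ∀ i : ι, i ∈ αBP.biUnion N ∪ αMF.biUnion N)
    (f : ∀ a : α, Cfg S (N a) → ℝ)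
    (hfBP : ∀ a ∈ αBP, ∀ xa, 0 ≤ f a xa)
    (hkBP : ∀ a ∈ αBP, 0 < ∑ xa : Cfg S (N a), f a xa)
    (hfMF : ∀ a ∈ αMF, ∀ xa, 0 < f a xa)
    (ba : ∀ a : α, Cfg S (N a) → ℝ) (bi : ∀ i : ι, S i → ℝ)
    (hba0 : ∀ a ∈ αBP, ∀ xa, 0 ≤ ba a xa)
    (hba1 : ∀ a ∈ αBP, ∑ xa : Cfg S (N a), ba a xa = 1)
    (hbi0 : ∀ i : ι, ∀ xi, 0 ≤ bi i xi)
    (hbi1 : ∀ i : ι, ∑ xi : S i, bi i xi = 1)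
    (hmarg : ∀ a ∈ αBP, ∀ i : ι, ∀ hi : i ∈ N a, ∀ xi : S i,
      bi i xi = ∑ xa : Cfg S (N a), (if xa ⟨i, hi⟩ = xi then ba a xa else 0))
    (F : EReal)
    (hF : F = (∑ a ∈ αBP, ∑ xa : Cfg S (N a),
          (if ba a xa = 0 then (0 : EReal)
           else if f a xa = 0 then (⊤ : EReal)
           else ((ba a xa * Real.log (ba a xa / f a xa) : ℝ) : EReal)))
        + (((-(∑ a ∈ αMF, ∑ xa : Cfg S (N a),
            (∏ j : {x // x ∈ N a}, bi j.1 (xa j)) * Real.log (f a xa))) : ℝ) : EReal)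
        + (((-(∑ i : ι, ((((αBP.filter (fun c => i ∈ N c)).card : ℝ) - 1) *
            ∑ xi : S i, bi i xi * Real.log (bi i xi)))) : ℝ) : EReal)) :
    F < (⊤ : EReal) ↔
      ∀ a ∈ αBP, ∀ xa : Cfg S (N a), f a xa = 0 → ba a xa = 0 :=
  statement5_general S N αBP αMF f ba bi F hF
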